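/- arXiv:1411.2277 — 2 statements merged into one kernel-verified Lean document; each statement's English description precedes it below -/
import Mathlib

section
/- Let (G, m_0) be a bimaze, i.e., a bipartite graph G = (V, W) with a matching m_0 onto W. For every m_0-matchable set I ⊆ V there is a set B ⊇ I and an m_0-matching from B onto all of W. -/
open Set

section Bipartite

variable {V W : Type*}

/-- `m` is a matching in the bipartite graph with edge set `E ⊆ V × W`. -/
def IsBipMatching (E m : Set (V × W)) : Prop :=
  m ⊆ E ∧ ∀ p ∈ m, ∀ q ∈ m, (p.1 = q.1 ∨ p.2 = q.2) → p = q

/-- `I ⊆ V` is matchable in the bipartite graph with edge set `E`. -/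
def Matchable (E : Set (V × W)) (I : Set V) : Prop :=
  ∃ m, IsBipMatching E m ∧ Prod.fst '' m = I

/-- One step along an edge of `F` in the bipartite graph, on vertex type `V ⊕ W`. -/
def bipStep (F : Set (V × W)) : (V ⊕ W) → (V ⊕ W) → Prop := fun a b =>
  match a, b with
  | Sum.inl v, Sum.inr w => (v, w) ∈ F
  | Sum.inr w, Sum.inl v => (v, w) ∈ F
  | _, _ => False

/-- Every connected component of the bipartite graph with edge set `F` is finite. -/
def FiniteComponents (F : Set (V × W)) : Prop :=
  ∀ x : V ⊕ W, {y | Relation.ReflTransGen (bipStep F) x y}.Finite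

/-- `m` is an `m0`-matching: a matching such that every component of `m0 ∪ m` is finite. -/
def IsM0Matching (E m0 m : Set (V × W)) : Prop :=
  IsBipMatching E m ∧ FiniteComponents (m0 ∪ m)

/-- `I` is `m0`-matchable. -/
def M0Matchable (E m0 : Set (V × W)) (I : Set V) : Prop :=
  ∃ m, IsM0Matching E m0 m ∧ Prod.fst '' m = I

/-- `I` is `m0`-matchable onto `W'`. -/
def M0MatchableOnto (E m0 : Set (V × W)) (I : Set V) (W' : Set W) : Prop :=
  ∃ m, IsM0Matching E m0 m ∧ Prod.fst '' m = I ∧ Prod.snd '' m = W'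

end Bipartite

section Star

variable {V : Type*}

/-- The edge set of the converted bimaze of the dimaze `(D, B0)`: the right class is
`{v ∣ v ∉ B0}` (representing `(V \ B0)⋆`) and the edges are the identity matching
together with `v u⋆` for every edge `(u, v)` of `D`. -/
def starEdges (D : V → V → Prop) (B0 : Set V) : Set (V × V) :=
  {p | (p.1 = p.2 ∧ p.2 ∉ B0) ∨ (D p.2 p.1 ∧ p.2 ∉ B0)}

/-- The identity matching of the converted bimaze. -/
def starM0 (B0 : Set V) : Set (V × V) := {p | p.1 = p.2 ∧ p.1 ∉ B0}

end Star

/-!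
Let `S` consist of the right vertices reached by `m0`-`m`-alternating paths from right vertices
not covered by `m`, together with their `m0`-partners. As `m0` and `m` are matchings, `S` is a
union of components of `m0 ∪ m`; by construction its left vertices are covered by `m0` and the
right vertices outside it are covered by `m`. Hence using `m0` on `S` and `m` off `S` gives a
matching inside `m0 ∪ m` (so its components stay finite) which covers all of `W` and every left
vertex covered by `m`.
-/

open Relation

section Bimaze

variable {V W : Type*}

lemma bipStep_mono {F F' : Set (V × W)} (h : F ⊆ F') : bipStep F ≤ bipStep F' := by
  rintro (v | w) (v' | w') hs
  exacts [hs.elim, h hs, h hs, hs.elim]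

lemma FiniteComponents.mono {F F' : Set (V × W)} (h : F ⊆ F') (hF' : FiniteComponents F') :
    FiniteComponents F := fun x =>
  (hF' x).subset fun _ hy => ReflTransGen.mono (bipStep_mono h) _ _ hy

lemma IsBipMatching.fst_eq {E m : Set (V × W)} (hm : IsBipMatching E m) {v v' : V} {w : W}
    (h : (v, w) ∈ m) (h' : (v', w) ∈ m) : v = v' :=
  congrArg Prod.fst (hm.2 _ h _ h' (Or.inr rfl))

lemma IsBipMatching.snd_eq {E m : Set (V × W)} (hm : IsBipMatching E m) {v : V} {w w' : W}
    (h : (v, w) ∈ m) (h' : (v, w') ∈ m) : w = w' :=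
  congrArg Prod.snd (hm.2 _ h _ h' (Or.inl rfl))

/-- `S` is a union of connected components of the graph with edge set `F`. -/
def StepClosed (F : Set (V × W)) (S : Set (V ⊕ W)) : Prop :=
  ∀ ⦃x y⦄, x ∈ S → bipStep F x y → y ∈ S

lemma StepClosed.inl_mem_iff {F : Set (V × W)} {S : Set (V ⊕ W)} (hS : StepClosed F S)
    {p : V × W} (hp : p ∈ F) : Sum.inl p.1 ∈ S ↔ Sum.inr p.2 ∈ S :=
  ⟨fun h => hS h hp, fun h => hS h hp⟩

lemma StepClosed.inl_mem_of_adjacent {F : Set (V × W)} {S : Set (V ⊕ W)} (hS : StepClosed F S)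
    {p q : V × W} (hp : p ∈ F) (hq : q ∈ F) (hpq : p.1 = q.1 ∨ p.2 = q.2)
    (h : Sum.inl p.1 ∈ S) : Sum.inl q.1 ∈ S := by
  rcases hpq with h1 | h2
  · rwa [← h1]
  · rw [hS.inl_mem_iff hq, ← h2]
    exact (hS.inl_mem_iff hp).1 h

def switchOn (S : Set (V ⊕ W)) (m0 m : Set (V × W)) : Set (V × W) :=
  {p | p ∈ m0 ∧ Sum.inl p.1 ∈ S} ∪ {p | p ∈ m ∧ Sum.inl p.1 ∉ S}

section Switch

variable {S : Set (V ⊕ W)} {E m0 m : Set (V × W)}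

lemma switchOn_subset_union : switchOn S m0 m ⊆ m0 ∪ m := by
  rintro p (⟨hp, -⟩ | ⟨hp, -⟩)
  exacts [Or.inl hp, Or.inr hp]

lemma isBipMatching_switchOn (hm0 : IsBipMatching E m0) (hm : IsBipMatching E m)
    (hS : StepClosed (m0 ∪ m) S) : IsBipMatching E (switchOn S m0 m) := by
  refine ⟨switchOn_subset_union.trans (union_subset hm0.1 hm.1), ?_⟩
  rintro p (⟨hp, hpS⟩ | ⟨hp, hpS⟩) q (⟨hq, hqS⟩ | ⟨hq, hqS⟩) hpq
  · exact hm0.2 p hp q hq hpq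
  · exact (hqS (hS.inl_mem_of_adjacent (Or.inl hp) (Or.inr hq) hpq hpS)).elim
  · exact (hpS (hS.inl_mem_of_adjacent (Or.inl hq) (Or.inr hp) (hpq.imp Eq.symm Eq.symm)
      hqS)).elim
  · exact hm.2 p hp q hq hpq

lemma isM0Matching_switchOn (hm0 : IsBipMatching E m0) (hm : IsM0Matching E m0 m)
    (hS : StepClosed (m0 ∪ m) S) : IsM0Matching E m0 (switchOn S m0 m) :=
  ⟨isBipMatching_switchOn hm0 hm.1 hS,
    FiniteComponents.mono (union_subset subset_union_left switchOn_subset_union) hm.2⟩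

lemma fst_image_subset_switchOn (hcov : ∀ v, Sum.inl v ∈ S → v ∈ Prod.fst '' m0) :
    Prod.fst '' m ⊆ Prod.fst '' switchOn S m0 m := by
  rintro v ⟨p, hp, rfl⟩
  by_cases hpS : Sum.inl p.1 ∈ S
  · obtain ⟨q, hq, hqp⟩ := hcov p.1 hpS
    exact ⟨q, Or.inl ⟨hq, hqp ▸ hpS⟩, hqp⟩
  · exact ⟨p, Or.inr ⟨hp, hpS⟩, rfl⟩

lemma snd_image_switchOn_eq_univ (hsnd : Prod.snd '' m0 = univ) (hS : StepClosed (m0 ∪ m) S)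
    (hcov : ∀ w, Sum.inr w ∉ S → w ∈ Prod.snd '' m) :
    Prod.snd '' switchOn S m0 m = univ := by
  refine eq_univ_of_forall fun w => ?_
  obtain ⟨p, hp, rfl⟩ : w ∈ Prod.snd '' m0 := hsnd ▸ mem_univ w
  by_cases hpS : Sum.inl p.1 ∈ S
  · exact ⟨p, Or.inl ⟨hp, hpS⟩, rfl⟩
  obtain ⟨q, hq, hqp⟩ := hcov p.2 (mt (hS.inl_mem_iff (Or.inl hp)).2 hpS)
  refine ⟨q, Or.inr ⟨hq, ?_⟩, hqp⟩
  rwa [hS.inl_mem_iff (Or.inr hq), hqp, ← hS.inl_mem_iff (Or.inl hp)]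

end Switch

def altStep (m0 m : Set (V × W)) (w w' : W) : Prop := ∃ v, (v, w) ∈ m0 ∧ (v, w') ∈ m

def altReach (m0 m : Set (V × W)) : Set W :=
  {w | ∃ w₀ ∉ Prod.snd '' m, ReflTransGen (altStep m0 m) w₀ w}

def altRegion (m0 m : Set (V × W)) : Set (V ⊕ W) :=
  {x | Sum.elim (fun v => ∃ w ∈ altReach m0 m, (v, w) ∈ m0) (· ∈ altReach m0 m) x}

section Alternating

variable {E m0 m : Set (V × W)}

lemma inr_mem_altRegion {w : W} : Sum.inr w ∈ altRegion m0 m ↔ w ∈ altReach m0 m := Iff.rfl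

lemma stepClosed_altRegion (hm0 : IsBipMatching E m0) (hm : IsBipMatching E m) :
    StepClosed (m0 ∪ m) (altRegion m0 m) := by
  rintro (v | w) (v' | w') hx hstep
  · exact hstep.elim
  · obtain ⟨w, ⟨w₀, hw₀, hpath⟩, hvw⟩ := hx
    rcases hstep with h0 | h
    · rw [inr_mem_altRegion, hm0.snd_eq h0 hvw]
      exact ⟨w₀, hw₀, hpath⟩
    · exact ⟨w₀, hw₀, hpath.tail ⟨v, hvw, h⟩⟩
  · rcases hstep with h0 | h
    · exact ⟨w, hx, h0⟩
    · obtain ⟨w₀, hw₀, hpath⟩ := hx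
      rcases hpath.cases_tail with rfl | ⟨w₁, hpath₁, v₁, hv₁w₁, hv₁w⟩
      · exact (hw₀ ⟨_, h, rfl⟩).elim
      · refine ⟨w₁, ⟨w₀, hw₀, hpath₁⟩, ?_⟩
        rwa [hm.fst_eq h hv₁w]
  · exact hstep.elim

lemma fst_mem_image_of_inl_mem_altRegion {v : V} (h : Sum.inl v ∈ altRegion m0 m) :
    v ∈ Prod.fst '' m0 :=
  let ⟨w, _, hvw⟩ := h
  ⟨(v, w), hvw, rfl⟩

lemma snd_mem_image_of_inr_notMem_altRegion {w : W} (h : Sum.inr w ∉ altRegion m0 m) :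
    w ∈ Prod.snd '' m := by
  by_contra hw
  exact h ⟨w, hw, .refl⟩

end Alternating

end Bimaze

theorem extend_m0_matchable_onto {V W : Type*} (E m0 : Set (V × W))
    (hm0 : IsBipMatching E m0) (hsnd : Prod.snd '' m0 = Set.univ)
    (I : Set V) (hI : M0Matchable E m0 I) :
    ∃ B : Set V, I ⊆ B ∧ M0MatchableOnto E m0 B Set.univ := by
  obtain ⟨m, hm, rfl⟩ := hI
  have hS : StepClosed (m0 ∪ m) (altRegion m0 m) := stepClosed_altRegion hm0 hm.1
  exact ⟨_, fst_image_subset_switchOn fun _ => fst_mem_image_of_inl_mem_altRegion,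
    _, isM0Matching_switchOn hm0 hm hS, rfl,
    snd_image_switchOn_eq_univ hsnd hS fun _ => snd_mem_image_of_inr_notMem_altRegion⟩
end

section
/- Let G = (V, W) be a bipartite graph such that M_T(G) is a finitary matroid, and let K be a set of non-edges between V and W. Then M_T(G) ≠ M_T(G + K) if and only if there exist vw ∈ K and a circuit C of M_T(G) with v ∈ C and w ∉ N(C), which in turn holds if and only if there is vw ∈ K such that v is not a coloop of the matroid M_T(G) with the vertices N(w) deleted. -/
open Set

/-- Deletion of `X` from the matroid `M`. -/
def Matroid.del {α : Type*} (M : Matroid α) (X : Set α) : Matroid α := M.restrict (M.E \ X)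

/-- Contraction of `X` in the matroid `M`, defined via duality. -/
def Matroid.con {α : Type*} (M : Matroid α) (X : Set α) : Matroid α := (M.dual.del X).dual

/-- `C` is a circuit of `M`: a minimal dependent set. -/
def Matroid.IsCircuitOf {α : Type*} (M : Matroid α) (C : Set α) : Prop :=
  C ⊆ M.E ∧ ¬ M.Indep C ∧ ∀ C' ⊂ C, M.Indep C'

/-- `e` is a coloop of `M`: an element of the ground set lying in no circuit. -/
def Matroid.IsColoopOf {α : Type*} (M : Matroid α) (e : α) : Prop :=
  e ∈ M.E ∧ ∀ C, M.IsCircuitOf C → e ∉ C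

/-- `N` is a minor of `M`. -/
def Matroid.IsMinorOf {α : Type*} (N M : Matroid α) : Prop :=
  ∃ C D, C ⊆ M.E ∧ D ⊆ M.E ∧ Disjoint C D ∧ N = (M.con C).del D

section AuxProofs

variable {V W : Type*}

private lemma bip_injOn_fst {E m : Set (V × W)} (hm : IsBipMatching E m) :
    Set.InjOn Prod.fst m := fun p hp q hq h => hm.2 p hp q hq (Or.inl h)

private lemma bip_injOn_snd {E m : Set (V × W)} (hm : IsBipMatching E m) :
    Set.InjOn Prod.snd m := fun p hp q hq h => hm.2 p hp q hq (Or.inr h)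

private lemma matchable_mono {E E' : Set (V × W)} (h : E ⊆ E') {I : Set V} :
    Matchable E I → Matchable E' I := by
  rintro ⟨m, ⟨hmE, hmm⟩, him⟩
  exact ⟨m, ⟨hmE.trans h, hmm⟩, him⟩

private lemma matchable_subset {E : Set (V × W)} {I S : Set V} (hS : S ⊆ I)
    (h : Matchable E I) : Matchable E S := by
  obtain ⟨m, hm, him⟩ := h
  refine ⟨m ∩ Prod.fst ⁻¹' S, ⟨inter_subset_left.trans hm.1,
    fun p hp q hq hh => hm.2 p hp.1 q hq.1 hh⟩, ?_⟩
  apply subset_antisymm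
  · rintro v ⟨p, ⟨hpm, hpS⟩, rfl⟩
    exact hpS
  · intro v hv
    have hvm : v ∈ Prod.fst '' m := by rw [him]; exact hS hv
    obtain ⟨p, hpm, rfl⟩ := hvm
    exact ⟨p, ⟨hpm, hv⟩, rfl⟩

/-- The easy direction of Hall's theorem. -/
private lemma hall_easy {E : Set (V × W)} {S : Set V} (hS : S.Finite)
    (h : Matchable E S) (hN : {w | ∃ v ∈ S, (v, w) ∈ E}.Finite) :
    S.ncard ≤ {w | ∃ v ∈ S, (v, w) ∈ E}.ncard := by
  obtain ⟨m, hm, him⟩ := h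
  have h1 : S.ncard = m.ncard := by
    rw [← him, Set.ncard_image_of_injOn (bip_injOn_fst hm)]
  have h2 : m.ncard = (Prod.snd '' m).ncard :=
    (Set.ncard_image_of_injOn (bip_injOn_snd hm)).symm
  have h3 : Prod.snd '' m ⊆ {w | ∃ v ∈ S, (v, w) ∈ E} := by
    rintro w ⟨p, hpm, rfl⟩
    have hp1 : p.1 ∈ S := by rw [← him]; exact ⟨p, hpm, rfl⟩
    exact ⟨p.1, hp1, hm.1 hpm⟩
  rw [h1, h2]
  exact Set.ncard_le_ncard h3 hN

/-- The hard direction of Hall's theorem, for a finite left side and arbitrary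
neighbourhoods. -/
private lemma hall_hard {E : Set (V × W)} {I : Set V} (hI : I.Finite)
    (h : ∀ S, S ⊆ I → {w | ∃ v ∈ S, (v, w) ∈ E}.Finite →
      S.ncard ≤ {w | ∃ v ∈ S, (v, w) ∈ E}.ncard) : Matchable E I := by
  classical
  have trim : ∀ v : V, ∃ F : Finset W, (↑F : Set W) ⊆ {w | (v, w) ∈ E} ∧
      ({w | (v, w) ∈ E}.Finite → (↑F : Set W) = {w | (v, w) ∈ E}) ∧
      (¬ {w | (v, w) ∈ E}.Finite → I.ncard ≤ F.card) := by
    intro v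
    by_cases hfin : {w | (v, w) ∈ E}.Finite
    · exact ⟨hfin.toFinset, by simp, fun _ => by simp, fun hc => absurd hfin hc⟩
    · obtain ⟨t, hts, htfin, htcard⟩ :=
        Set.Infinite.exists_subset_ncard_eq hfin I.ncard
      refine ⟨htfin.toFinset, by simpa using hts, fun hf => absurd hf hfin, fun _ => ?_⟩
      have hc : htfin.toFinset.card = t.ncard := by
        rw [← Set.ncard_coe_finset, htfin.coe_toFinset]
      omega
  choose F hF1 hF2 hF3 using trim
  have hall : ∀ s : Finset I, s.card ≤ (s.biUnion fun v => F v.1).card := by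
    intro s
    set S : Set V := ↑(s.image Subtype.val) with hSdef
    have hScard : S.ncard = s.card := by
      rw [Set.ncard_coe_finset, Finset.card_image_of_injective s Subtype.val_injective]
    have hSI : S ⊆ I := by
      intro x hx
      simp only [hSdef, Finset.coe_image, Set.mem_image, Finset.mem_coe] at hx
      obtain ⟨y, -, rfl⟩ := hx
      exact y.2
    by_cases hcase : ∀ v ∈ s, {w | ((v : V), w) ∈ E}.Finite
    · have key : ((s.biUnion fun v => F v.1 : Finset W) : Set W)
          = {w | ∃ x ∈ S, (x, w) ∈ E} := by
        ext w
        simp only [Finset.coe_biUnion, Finset.mem_coe, Set.mem_iUnion, Set.mem_setOf_eq]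
        constructor
        · rintro ⟨v, hvs, hw⟩
          refine ⟨v.1, ?_, hF1 v.1 hw⟩
          exact Finset.mem_coe.mpr (Finset.mem_image_of_mem _ hvs)
        · rintro ⟨x, hxS, hxw⟩
          have : x ∈ s.image Subtype.val := hxS
          obtain ⟨v, hvs, rfl⟩ := Finset.mem_image.mp this
          refine ⟨v, hvs, ?_⟩
          rw [← Finset.mem_coe, hF2 v.1 (hcase v hvs)]
          exact hxw
      have hNfin : {w | ∃ x ∈ S, (x, w) ∈ E}.Finite := by
        rw [← key]; exact (s.biUnion fun v => F v.1).finite_toSet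
      have hh := h S hSI hNfin
      have h2 : {w | ∃ x ∈ S, (x, w) ∈ E}.ncard = (s.biUnion fun v => F v.1).card := by
        rw [← key, Set.ncard_coe_finset]
      omega
    · push_neg at hcase
      obtain ⟨v, hvs, hvinf⟩ := hcase
      have h1 : I.ncard ≤ (F v.1).card := hF3 v.1 hvinf
      have h2 : (F v.1).card ≤ (s.biUnion fun v => F v.1).card :=
        Finset.card_le_card (Finset.subset_biUnion_of_mem (fun v => F v.1) hvs)
      have h3 : s.card ≤ I.ncard := by
        rw [← hScard]; exact Set.ncard_le_ncard hSI hI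
      omega
  obtain ⟨f, hfinj, hf⟩ :=
    (Finset.all_card_le_biUnion_card_iff_exists_injective fun v : I => F v.1).mp hall
  refine ⟨(fun v : I => ((v : V), f v)) '' Set.univ, ⟨?_, ?_⟩, ?_⟩
  · rintro q ⟨v, -, rfl⟩
    exact hF1 v.1 (hf v)
  · rintro q ⟨x, -, rfl⟩ r ⟨y, -, rfl⟩ hqr
    have hxy : x = y := by
      rcases hqr with h1 | h2
      · exact Subtype.ext h1
      · exact hfinj h2
    rw [hxy]
  · apply subset_antisymm
    · rintro x ⟨q, ⟨v, -, rfl⟩, rfl⟩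
      exact v.2
    · intro x hx
      exact ⟨(x, f ⟨x, hx⟩), ⟨⟨x, hx⟩, trivial, rfl⟩, rfl⟩

/-- If no circuit witnesses a "useful" non-edge of `K`, then every finite set matchable
in `E ∪ K` is independent in `M`. -/
private lemma indep_of_union_matchable {E K : Set (V × W)} {M : Matroid V}
    (hE : M.E = Set.univ) (hInd : ∀ I, M.Indep I ↔ Matchable E I)
    (hP : ¬ ∃ p ∈ K, ∃ C, M.IsCircuitOf C ∧ p.1 ∈ C ∧ p.2 ∉ {w | ∃ v ∈ C, (v, w) ∈ E})
    {I : Set V} (hIfin : I.Finite) (hm : Matchable (E ∪ K) I) : M.Indep I := by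
  classical
  by_cases hall : ∀ S, S ⊆ I → {w | ∃ v ∈ S, (v, w) ∈ E}.Finite →
      S.ncard ≤ {w | ∃ v ∈ S, (v, w) ∈ E}.ncard
  · exact (hInd I).2 (hall_hard hIfin hall)
  push_neg at hall
  obtain ⟨S₀, hS₀I, hS₀N, hS₀lt⟩ := hall
  have hex : ∃ n, ∃ S, S ⊆ I ∧ {w | ∃ v ∈ S, (v, w) ∈ E}.Finite ∧
      {w | ∃ v ∈ S, (v, w) ∈ E}.ncard < S.ncard ∧ S.ncard = n :=
    ⟨S₀.ncard, S₀, hS₀I, hS₀N, hS₀lt, rfl⟩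
  obtain ⟨S, hSI, hN, hlt, hcard⟩ := Nat.find_spec hex
  have hSfin : S.Finite := hIfin.subset hSI
  -- `S` is a circuit of `M`.
  have hcirc : M.IsCircuitOf S := by
    refine ⟨by rw [hE]; exact Set.subset_univ _, ?_, ?_⟩
    · intro hind
      exact absurd (hall_easy hSfin ((hInd S).1 hind) hN) (by omega)
    · intro C' hC'
      refine (hInd C').2 (hall_hard (hSfin.subset hC'.subset) ?_)
      intro T hTC' hTN
      by_contra hTlt
      push_neg at hTlt
      have hT : T.ncard < Nat.find hex := by
        have e1 : T.ncard ≤ C'.ncard := Set.ncard_le_ncard hTC' (hSfin.subset hC'.subset)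
        have e2 : C'.ncard < S.ncard := Set.ncard_lt_ncard hC' hSfin
        omega
      exact Nat.find_min hex hT ⟨T, hTC'.trans (hC'.subset.trans hSI), hTN, hTlt, rfl⟩
  -- a matching of `S` in `E ∪ K` must use an edge of `K` leaving the `E`-neighbourhood
  obtain ⟨m, hmm, hmI⟩ := matchable_subset hSI hm
  have hsub : ¬ (Prod.snd '' m ⊆ {w | ∃ v ∈ S, (v, w) ∈ E}) := by
    intro hsub
    have h1 : (Prod.snd '' m).ncard = S.ncard := by
      rw [← hmI, Set.ncard_image_of_injOn (bip_injOn_snd hmm),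
        Set.ncard_image_of_injOn (bip_injOn_fst hmm)]
    have h2 := Set.ncard_le_ncard hsub hN
    omega
  obtain ⟨w, hwm, hw⟩ := Set.not_subset.mp hsub
  obtain ⟨p, hpm, rfl⟩ := hwm
  have hp1 : p.1 ∈ S := by rw [← hmI]; exact ⟨p, hpm, rfl⟩
  have hpK : p ∈ K := by
    rcases hmm.1 hpm with hE' | hK'
    · exact absurd ⟨p.1, hp1, hE'⟩ hw
    · exact hK'
  exact absurd ⟨p, hpK, S, hcirc, hp1, hw⟩ hP

private lemma restrict_isCircuitOf_iff (M : Matroid V) (hE : M.E = Set.univ)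
    (R C : Set V) : (M.restrict R).IsCircuitOf C ↔ M.IsCircuitOf C ∧ C ⊆ R := by
  constructor
  · rintro ⟨hCg, hdep, hmin⟩
    rw [Matroid.restrict_ground_eq] at hCg
    exact ⟨⟨by rw [hE]; exact Set.subset_univ _,
      fun hind => hdep (Matroid.restrict_indep_iff.mpr ⟨hind, hCg⟩),
      fun C' hC' => (Matroid.restrict_indep_iff.mp (hmin C' hC')).1⟩, hCg⟩
  · rintro ⟨⟨hCg, hdep, hmin⟩, hCR⟩
    exact ⟨by rw [Matroid.restrict_ground_eq]; exact hCR,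
      fun hind => hdep (Matroid.restrict_indep_iff.mp hind).1,
      fun C' hC' => Matroid.restrict_indep_iff.mpr ⟨hmin C' hC', hC'.subset.trans hCR⟩⟩

private lemma coloop_iff_aux (E : Set (V × W)) (M : Matroid V) (hE : M.E = Set.univ)
    {p : V × W} (hpE : p ∉ E) :
    (¬ (M.restrict (Set.univ \ {v | (v, p.2) ∈ E})).IsColoopOf p.1) ↔
      ∃ C, M.IsCircuitOf C ∧ p.1 ∈ C ∧ p.2 ∉ {w | ∃ v ∈ C, (v, w) ∈ E} := by
  set R := Set.univ \ {v | (v, p.2) ∈ E} with hR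
  have hp1R : p.1 ∈ R := ⟨trivial, fun h => hpE h⟩
  unfold Matroid.IsColoopOf
  rw [Matroid.restrict_ground_eq]
  simp only [hp1R, true_and, not_forall]
  constructor
  · rintro ⟨C, hC, hpC⟩
    rw [not_not] at hpC
    rw [restrict_isCircuitOf_iff M hE] at hC
    refine ⟨C, hC.1, hpC, ?_⟩
    rintro ⟨v, hvC, hvE⟩
    exact (hC.2 hvC).2 hvE
  · rintro ⟨C, hC, hpC, hw⟩
    refine ⟨C, (restrict_isCircuitOf_iff M hE _ _).mpr ⟨hC, ?_⟩, not_not.mpr hpC⟩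
    intro x hxC
    exact ⟨trivial, fun hx => hw ⟨x, hxC, hx⟩⟩

end AuxProofs

theorem adding_nonedges_changes_transversal_iff {V W : Type*} (E : Set (V × W))
    (M : Matroid V) (hE : M.E = Set.univ) (hInd : ∀ I, M.Indep I ↔ Matchable E I)
    (hfin : M.Finitary) (K : Set (V × W)) (hK : ∀ p ∈ K, p ∉ E) :
    ((Matchable E ≠ Matchable (E ∪ K)) ↔
      ∃ p ∈ K, ∃ C, M.IsCircuitOf C ∧ p.1 ∈ C ∧ p.2 ∉ {w | ∃ v ∈ C, (v, w) ∈ E}) ∧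
    ((Matchable E ≠ Matchable (E ∪ K)) ↔
      ∃ p ∈ K, ¬ (M.restrict (Set.univ \ {v | (v, p.2) ∈ E})).IsColoopOf p.1) := by
  haveI := hfin
  have key : (Matchable E ≠ Matchable (E ∪ K)) ↔
      ∃ p ∈ K, ∃ C, M.IsCircuitOf C ∧ p.1 ∈ C ∧ p.2 ∉ {w | ∃ v ∈ C, (v, w) ∈ E} := by
    constructor
    · intro hne
      by_contra hP
      apply hne
      funext I
      apply propext
      constructor
      · exact fun h => matchable_mono Set.subset_union_left h
      · intro h
        refine (hInd I).1 ?_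
        refine Matroid.indep_of_forall_finite_subset_indep I (fun J hJ hJfin => ?_)
        exact indep_of_union_matchable hE hInd hP hJfin (matchable_subset hJ h)
    · rintro ⟨p, hpK, C, hC, hpC, hw⟩
      have hCdep : ¬ Matchable E C := fun h => hC.2.1 ((hInd C).2 h)
      have hindep : M.Indep (C \ {p.1}) :=
        hC.2.2 _ (Set.sdiff_singleton_ssubset.mpr hpC)
      obtain ⟨m₀, hm₀, him₀⟩ := (hInd _).1 hindep
      have hvm : p.1 ∉ Prod.fst '' m₀ := by rw [him₀]; simp
      have hwm : ∀ q ∈ m₀, q.2 ≠ p.2 := by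
        intro q hq hqp
        apply hw
        have hq1 : q.1 ∈ C \ {p.1} := by rw [← him₀]; exact ⟨q, hq, rfl⟩
        exact ⟨q.1, hq1.1, hqp ▸ hm₀.1 hq⟩
      have hmatch : Matchable (E ∪ K) C := by
        refine ⟨insert p m₀, ⟨?_, ?_⟩, ?_⟩
        · rintro q hq
          rcases Set.mem_insert_iff.mp hq with rfl | hq'
          · exact Or.inr hpK
          · exact Or.inl (hm₀.1 hq')
        · intro q hq r hr hqr
          rcases Set.mem_insert_iff.mp hq with rfl | hq'
          · rcases Set.mem_insert_iff.mp hr with rfl | hr'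
            · rfl
            · exfalso
              rcases hqr with h1 | h2
              · exact hvm ⟨r, hr', h1.symm⟩
              · exact hwm r hr' h2.symm
          · rcases Set.mem_insert_iff.mp hr with rfl | hr'
            · exfalso
              rcases hqr with h1 | h2
              · exact hvm ⟨q, hq', h1⟩
              · exact hwm q hq' h2
            · exact hm₀.2 q hq' r hr' hqr
        · rw [Set.image_insert_eq, him₀, Set.insert_diff_singleton,
            Set.insert_eq_self.mpr hpC]
      intro heq
      rw [← heq] at hmatch
      exact hCdep hmatch
  refine ⟨key, key.trans ?_⟩
  constructor
  · rintro ⟨p, hpK, C, hC, hpC, hw⟩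
    exact ⟨p, hpK, (coloop_iff_aux E M hE (hK p hpK)).mpr ⟨C, hC, hpC, hw⟩⟩
  · rintro ⟨p, hpK, hcol⟩
    obtain ⟨C, hC, hpC, hw⟩ := (coloop_iff_aux E M hE (hK p hpK)).mp hcol
    exact ⟨p, hpK, C, hC, hpC, hw⟩
end
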